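/- Let C be a unital C*-algebra. Then GL(C)_{SA,∞} := { x ∈ GL(C) : x = x*, 1_{≥0}(x) ∼ 1 ∼ 1_{≥0}(−x) } is norm-closed in GL(C) and relatively open in the set GL(C)_{SA} of self-adjoint invertibles of C. -/

import Mathlib

/-- The spectral projection `1_{≥0}(x)` of a self-adjoint element onto `[0, ∞)`,
obtained by applying the indicator function of `[0, ∞)` via the continuous
functional calculus. -/
noncomputable def posSpectralProj {C : Type*} [CStarAlgebra C] (x : C) : C :=
  cfc (fun t : ℝ => if 0 ≤ t then (1 : ℝ) else 0) x

/-- Murray–von Neumann equivalence of projections. -/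
def MvNEquiv {C : Type*} [Mul C] [Star C] (p q : C) : Prop :=
  ∃ v : C, star v * v = p ∧ v * star v = q

/-!
The map `x ↦ 1_{≥0}(x)` is norm-continuous on the self-adjoint invertibles: the indicator of
`[0, ∞)` is continuous off `0`, and the spectrum of nearby elements stays away from `0`.
Two projections `p`, `q` with `‖p - q‖ < 1` are Murray–von Neumann equivalent, because
`u = q p + (1 - q)(1 - p)` is invertible with `u p = q u`, and the unitary part of the polar
decomposition of `u` still intertwines `p` and `q`. Hence the classes of `1_{≥0}(±x)` are
locally constant on `GL(C)_{SA}`, so the condition `1_{≥0}(x) ∼ 1 ∼ 1_{≥0}(-x)` cuts out a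
relatively clopen subset of `GL(C)_{SA}`, which is itself closed in `GL(C)`.
-/

open Filter Topology

namespace MvNEquiv

variable {R : Type*} [Monoid R] [StarMul R] {p q r : R}

theorem symm (h : MvNEquiv p q) : MvNEquiv q p := by
  obtain ⟨v, hv, hv'⟩ := h
  exact ⟨star v, by rwa [star_star], by rwa [star_star]⟩

theorem trans (hp : IsIdempotentElem p) (hr : IsIdempotentElem r)
    (hpq : MvNEquiv p q) (hqr : MvNEquiv q r) : MvNEquiv p r := by
  obtain ⟨v, hv, hv'⟩ := hpq
  obtain ⟨w, hw, hw'⟩ := hqr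
  refine ⟨w * v, ?_, ?_⟩
  · calc star (w * v) * (w * v) = star v * (star w * w) * v := by simp only [star_mul, mul_assoc]
      _ = (star v * v) * (star v * v) := by rw [hw, ← hv']; simp only [mul_assoc]
      _ = p := by rw [hv, hp.eq]
  · calc w * v * star (w * v) = w * (v * star v) * star w := by simp only [star_mul, mul_assoc]
      _ = (w * star w) * (w * star w) := by rw [hv', ← hw]; simp only [mul_assoc]
      _ = r := by rw [hw', hr.eq]

theorem of_mul_eq_mul_of_mem_unitary {w : R} (hw : w ∈ unitary R) (hp : IsStarProjection p)
    (hwpq : w * p = q * w) : MvNEquiv p q := by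
  refine ⟨w * p, ?_, ?_⟩
  · calc star (w * p) * (w * p) = p * (star w * w) * p := by
          simp only [star_mul, hp.isSelfAdjoint.star_eq, mul_assoc]
      _ = p := by rw [Unitary.star_mul_self_of_mem hw, mul_one, hp.isIdempotentElem.eq]
  · calc w * p * star (w * p) = w * (p * p) * star w := by
          simp only [star_mul, hp.isSelfAdjoint.star_eq, mul_assoc]
      _ = q * (w * star w) := by rw [hp.isIdempotentElem.eq, hwpq, mul_assoc]
      _ = q := by rw [Unitary.mul_star_self_of_mem hw, mul_one]

end MvNEquiv

section CStarAlgebra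

variable {A : Type*} [CStarAlgebra A]

theorem exists_mem_unitary_mul_eq_mul_of_isUnit {p q u : A} (hp : IsSelfAdjoint p)
    (hq : IsSelfAdjoint q) (hu : IsUnit u) (hupq : u * p = q * u) :
    ∃ w ∈ unitary A, w * p = q * w := by
  let _ := CStarAlgebra.spectralOrder A
  let _ := CStarAlgebra.spectralOrderedRing A
  set a := star u * u
  have ha : IsStrictlyPositive a :=
    CStarAlgebra.isStrictlyPositive_iff_eq_star_mul_self.mpr ⟨u, hu, rfl⟩
  have hpu : p * star u = star u * q := by
    simpa only [star_mul, hp.star_eq, hq.star_eq, eq_comm] using congrArg star hupq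
  have hap : Commute a p :=
    calc a * p = star u * (q * u) := by rw [← hupq, mul_assoc]
      _ = p * a := by rw [← mul_assoc, ← hpu, mul_assoc]
  -- `u * s` is the unitary part of the polar decomposition of `u`.
  set s := a ^ (-(1 / 2) : ℝ)
  have hsp : Commute s p := hap.cfc_nnreal _
  have hsas : s * a * s = 1 :=
    calc s * a * s = a ^ (-(1 / 2) : ℝ) * a ^ (1 : ℝ) * a ^ (-(1 / 2) : ℝ) := by
          rw [CFC.rpow_one a]
      _ = a ^ (-(1 / 2) + 1 + -(1 / 2) : ℝ) := by
          rw [CFC.rpow_add ha.isUnit, CFC.rpow_add ha.isUnit]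
      _ = 1 := by norm_num [CFC.rpow_zero a]
  have hs : IsSelfAdjoint s := IsSelfAdjoint.of_nonneg CFC.rpow_nonneg
  refine ⟨u * s, ?_, ?_⟩
  · rw [(hu.mul (ha.isUnit.cfcRpow _)).mem_unitary_iff_star_mul_self]
    calc star (u * s) * (u * s) = s * a * s := by
          simp only [star_mul, hs.star_eq, a, mul_assoc]
      _ = 1 := hsas
  · rw [mul_assoc, hsp.eq, ← mul_assoc, hupq, mul_assoc]

theorem MvNEquiv.of_norm_sub_lt_one {p q : A} (hp : IsStarProjection p) (hq : IsStarProjection q)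
    (hpq : ‖p - q‖ < 1) : MvNEquiv p q := by
  set u := q * p + (1 - q) * (1 - p)
  have hu : IsUnit u := by
    have h : 1 - u = (2 * q - 1) * (q - p) :=
      calc 1 - u = (2 * q - 1) * (q - p) + 2 * (q - q * q) := by simp only [u]; noncomm_ring
        _ = (2 * q - 1) * (q - p) := by rw [hq.isIdempotentElem.eq, sub_self, mul_zero, add_zero]
    have hlt : ‖1 - u‖ < 1 := by
      rwa [h, CStarRing.norm_mem_unitary_mul _ hq.two_mul_sub_one_mem_unitary, norm_sub_rev]
    simpa only [sub_sub_cancel] using isUnit_one_sub_of_norm_lt_one hlt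
  have hupq : u * p = q * u :=
    calc u * p = q * (p * p) + (1 - q) * ((1 - p) * p) := by simp only [u]; noncomm_ring
      _ = q * q * p + q * (1 - q) * (1 - p) := by
        rw [hp.isIdempotentElem.eq, hq.isIdempotentElem.eq, hp.one_sub_mul_self,
          hq.mul_one_sub_self, mul_zero, zero_mul]
      _ = q * u := by simp only [u]; noncomm_ring
  obtain ⟨w, hw, hwpq⟩ := exists_mem_unitary_mul_eq_mul_of_isUnit hp.isSelfAdjoint
    hq.isSelfAdjoint hu hupq
  exact .of_mul_eq_mul_of_mem_unitary hw hp hwpq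

end CStarAlgebra

section posSpectralProj

variable {C : Type*} [CStarAlgebra C]

theorem isStarProjection_posSpectralProj (x : C) : IsStarProjection (posSpectralProj x) := by
  by_cases hcont : ContinuousOn (fun t : ℝ => if 0 ≤ t then (1 : ℝ) else 0) (spectrum ℝ x)
  · refine ⟨?_, IsSelfAdjoint.cfc⟩
    rw [IsIdempotentElem, posSpectralProj, ← cfc_mul _ _ x]
    exact cfc_congr fun t _ => by split_ifs <;> simp
  · -- `cfc` returns the junk value `0` here.
    rw [posSpectralProj, cfc_apply_of_not_continuousOn x hcont]
    exact .zero C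

theorem continuousOn_posSpectralProj :
    ContinuousOn (posSpectralProj (C := C)) {x | IsSelfAdjoint x ∧ IsUnit x} := by
  have hcont : ContinuousOn (fun t : ℝ => if 0 ≤ t then (1 : ℝ) else 0) {0}ᶜ := by
    intro t ht
    refine ContinuousAt.continuousWithinAt ?_
    rcases lt_or_gt_of_ne ht with h | h
    · exact (continuousAt_const (y := (0 : ℝ))).congr <| by
        filter_upwards [gt_mem_nhds h] with s hs using by simp [not_le.mpr hs]
    · exact (continuousAt_const (y := (1 : ℝ))).congr <| by
        filter_upwards [lt_mem_nhds h] with s hs using by simp [hs.le]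
  refine ContinuousOn.cfc_of_mem_nhdsSet (a := id) _ ?_ continuousOn_id (fun x hx => hx.1) hcont
  exact isOpen_compl_singleton.mem_nhdsSet.mpr <|
    Set.iUnion₂_subset fun x hx => spectrum.subset_singleton_zero_compl ℝ hx.2

theorem eventually_mvnEquiv_posSpectralProj {x : C} (hx : IsSelfAdjoint x) (hxu : IsUnit x) :
    ∀ᶠ y in 𝓝 x, IsSelfAdjoint y → MvNEquiv (posSpectralProj y) (posSpectralProj x) := by
  have hclose := (continuousOn_posSpectralProj x ⟨hx, hxu⟩).eventually
    (Metric.ball_mem_nhds _ one_pos)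
  filter_upwards [eventually_nhdsWithin_iff.mp hclose, Units.isOpen.mem_nhds hxu] with y hy hyu hsa
  exact .of_norm_sub_lt_one (isStarProjection_posSpectralProj y)
    (isStarProjection_posSpectralProj x) (mem_ball_iff_norm.mp (hy ⟨hsa, hyu⟩))

theorem eventually_mvnEquiv_posSpectralProj_one_iff {x : C} (hx : IsSelfAdjoint x)
    (hxu : IsUnit x) : ∀ᶠ y in 𝓝 x, IsSelfAdjoint y →
      (MvNEquiv (posSpectralProj y) 1 ↔ MvNEquiv (posSpectralProj x) 1) := by
  filter_upwards [eventually_mvnEquiv_posSpectralProj hx hxu] with y hy hsa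
  have hyx := hy hsa
  have hpx := (isStarProjection_posSpectralProj x).isIdempotentElem
  have hpy := (isStarProjection_posSpectralProj y).isIdempotentElem
  exact ⟨hyx.symm.trans hpx IsIdempotentElem.one, hyx.trans hpy IsIdempotentElem.one⟩

theorem eventually_mvnEquiv_posSpectralProj_and_neg_one_iff {x : C} (hx : IsSelfAdjoint x)
    (hxu : IsUnit x) : ∀ᶠ y in 𝓝 x, IsSelfAdjoint y →
      (MvNEquiv (posSpectralProj y) 1 ∧ MvNEquiv (posSpectralProj (-y)) 1 ↔
        MvNEquiv (posSpectralProj x) 1 ∧ MvNEquiv (posSpectralProj (-x)) 1) := by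
  filter_upwards [eventually_mvnEquiv_posSpectralProj_one_iff hx hxu,
    continuous_neg.continuousAt.eventually
      (eventually_mvnEquiv_posSpectralProj_one_iff hx.neg hxu.neg)]
    with y hpos hneg hsa
  exact and_congr (hpos hsa) (hneg hsa.neg)

end posSpectralProj

/-- Let `C` be a unital C*-algebra.  Then
`GL(C)_{SA,∞} = { x ∈ GL(C) : x = x*, 1_{≥0}(x) ∼ 1 ∼ 1_{≥0}(−x) }` is norm-closed in
`GL(C)` and relatively open in the set `GL(C)_{SA}` of self-adjoint invertibles of `C`. -/
theorem stmt13 {C : Type*} [CStarAlgebra C] :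
    IsClosed {x : {y : C // IsUnit y} |
        IsSelfAdjoint (x : C) ∧ MvNEquiv (posSpectralProj (x : C)) (1 : C) ∧
          MvNEquiv (posSpectralProj (-(x : C))) (1 : C)} ∧
    IsOpen {x : {y : C // IsUnit y ∧ IsSelfAdjoint y} |
        MvNEquiv (posSpectralProj (x : C)) (1 : C) ∧
          MvNEquiv (posSpectralProj (-(x : C))) (1 : C)} := by
  constructor
  · refine isClosed_iff_frequently.mpr fun x hx => ?_
    have hsa : IsSelfAdjoint (x : C) :=
      (isClosed_eq continuous_star continuous_id).mem_of_frequently_of_tendsto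
        (hx.mono fun y hy => hy.1) continuous_subtype_val.continuousAt
    obtain ⟨y, hy, hyx⟩ := (hx.and_eventually (continuous_subtype_val.continuousAt.eventually
      (eventually_mvnEquiv_posSpectralProj_and_neg_one_iff hsa x.2))).exists
    exact ⟨hsa, (hyx hy.1).mp hy.2⟩
  · refine isOpen_iff_mem_nhds.mpr fun x hx => ?_
    filter_upwards [continuous_subtype_val.continuousAt.eventually
      (eventually_mvnEquiv_posSpectralProj_and_neg_one_iff x.2.2 x.2.1)] with y hy
    exact (hy y.2.2).mpr hx
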